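/- arXiv:2303.11636 — 2 statements merged into one kernel-verified Lean document; each statement's English description precedes it below -/
import Mathlib

section
/- Let I ⊆ ℕ, h(i) ≤ j(i) for each i, and suppose weights satisfy the almost uniform condition: w(i,j,k) = n_k for all (i,j) outside a finite exceptional set and p·n_k ≤ w(i,j,k) ≤ q·n_k everywhere, with p, q fixed positive rationals. If the limit L = lim_k (Σ_{i∈I, i<k} h(i)) / (Σ_{i<k} j(i)) exists, then lim_k (Σ_{i∈I, i<k} Σ_{j<h(i)} w(i,j,k)) / (Σ_{i<k} Σ_{j<j(i)} w(i,j,k)) also exists and equals L. -/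
/-! Writing each weight as `n k + (w i jj k - n k)`, the weighted numerator and denominator are
`n k` times the counting numerator and denominator, up to errors that vanish off the finite
exceptional set and are `O(n k)` on it, hence `O(n k)` in total. After dividing by `n k`, these
bounded errors are negligible against the counting denominator, which tends to infinity. -/

open Filter Finset Topology

theorem abs_sum_sum_le_card_mul {ι κ : Type*} [DecidableEq ι] [DecidableEq κ]
    (s : Finset ι) (t : ι → Finset κ) (d : ι → κ → ℝ) (b : Finset (ι × κ)) {M : ℝ} (hM : 0 ≤ M)
    (hzero : ∀ i ∈ s, ∀ x ∈ t i, (i, x) ∉ b → d i x = 0)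
    (hle : ∀ i ∈ s, ∀ x ∈ t i, |d i x| ≤ M) :
    |∑ i ∈ s, ∑ x ∈ t i, d i x| ≤ #b * M := by
  set S := (s.sigma t).filter fun p => (p.1, p.2) ∈ b
  have hsum : ∑ i ∈ s, ∑ x ∈ t i, d i x = ∑ p ∈ S, d p.1 p.2 := by
    rw [sum_sigma', sum_filter_of_ne]
    intro p hp hne
    by_contra hpb
    rw [mem_sigma] at hp
    exact hne (hzero _ hp.1 _ hp.2 hpb)
  have hcard : #S ≤ #b :=
    card_le_card_of_injOn (fun p => (p.1, p.2)) (fun p hp => (mem_filter.mp hp).2)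
      fun p _ p' _ hpp' => Sigma.ext (congrArg Prod.fst hpp') (heq_of_eq (congrArg Prod.snd hpp'))
  calc |∑ i ∈ s, ∑ x ∈ t i, d i x| ≤ ∑ p ∈ S, |d p.1 p.2| := hsum ▸ abs_sum_le_sum_abs _ _
    _ ≤ #S * M := by
      simpa using sum_le_card_nsmul S _ M fun p hp =>
        have hp := mem_sigma.mp (mem_filter.mp hp).1
        hle _ hp.1 _ hp.2
    _ ≤ #b * M := by gcongr

theorem abs_sum_sum_range_sub_mul_le (s : Finset ℕ) (m : ℕ → ℕ) (v : ℕ → ℕ → ℝ) (c : ℝ)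
    (b : Finset (ℕ × ℕ)) {M : ℝ} (hM : 0 ≤ M)
    (hzero : ∀ i ∈ s, ∀ x < m i, (i, x) ∉ b → v i x = c)
    (hle : ∀ i ∈ s, ∀ x < m i, |v i x - c| ≤ M) :
    |∑ i ∈ s, ∑ x ∈ range (m i), v i x - c * ((∑ i ∈ s, m i : ℕ) : ℝ)| ≤ #b * M := by
  have hsplit : ∑ i ∈ s, ∑ x ∈ range (m i), v i x - c * ((∑ i ∈ s, m i : ℕ) : ℝ)
      = ∑ i ∈ s, ∑ x ∈ range (m i), (v i x - c) := by
    simp only [sum_sub_distrib, sum_const, card_range, nsmul_eq_mul, Nat.cast_sum, sum_mul,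
      mul_comm c]
  rw [hsplit]
  exact abs_sum_sum_le_card_mul s _ _ b hM
    (fun i hi x hx hxb => sub_eq_zero.mpr (hzero i hi x (mem_range.mp hx) hxb))
    fun i hi x hx => hle i hi x (mem_range.mp hx)

theorem abs_sub_le_max_mul_of_mul_le_of_le_mul {w c p q : ℝ} (hc : 0 ≤ c) (hpw : p * c ≤ w)
    (hwq : w ≤ q * c) : |w - c| ≤ max |p - 1| |q - 1| * c := by
  calc |w - c| ≤ max |(p - 1) * c| |(q - 1) * c| := abs_le_max_abs_abs (by linarith) (by linarith)
    _ = max |p - 1| |q - 1| * c := by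
      rw [abs_mul, abs_mul, abs_of_nonneg hc, max_mul_of_nonneg _ _ hc]

theorem tendsto_div_atTop_of_abs_le {ι : Type*} {l : Filter ι} {e T : ι → ℝ} {B : ℝ}
    (hT : Tendsto T l atTop) (he : ∀ k, |e k| ≤ B) : Tendsto (fun k => e k / T k) l (𝓝 0) :=
  isBoundedUnder_le_mul_tendsto_zero (isBoundedUnder_of ⟨B, he⟩) (tendsto_inv_atTop_zero.comp hT)

theorem abs_div_sub_le_of_abs_sub_mul_le {x y c B : ℝ} (hc : 0 < c) (h : |x - c * y| ≤ B * c) :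
    |x / c - y| ≤ B := by
  rwa [show x / c - y = (x - c * y) / c by field_simp, abs_div, abs_of_pos hc, div_le_iff₀ hc]

theorem tendsto_div_of_abs_sub_mul_le {ι : Type*} {l : Filter ι} {a T A D n : ι → ℝ} {L B : ℝ}
    (hn : ∀ k, 0 < n k) (hT : Tendsto T l atTop) (ha : Tendsto (fun k => a k / T k) l (𝓝 L))
    (hA : ∀ k, |A k - n k * a k| ≤ B * n k) (hD : ∀ k, |D k - n k * T k| ≤ B * n k) :
    Tendsto (fun k => A k / D k) l (𝓝 L) := by
  set e := fun k => A k / n k - a k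
  set f := fun k => D k / n k - T k
  have hlim : Tendsto (fun k => (a k / T k + e k / T k) / (1 + f k / T k)) l (𝓝 L) := by
    have he := tendsto_div_atTop_of_abs_le hT fun k =>
      abs_div_sub_le_of_abs_sub_mul_le (hn k) (hA k)
    have hf := tendsto_div_atTop_of_abs_le hT fun k =>
      abs_div_sub_le_of_abs_sub_mul_le (hn k) (hD k)
    have := (ha.add he).div (tendsto_const_nhds.add hf) (by norm_num : (1 : ℝ) + 0 ≠ 0)
    rwa [add_zero, add_zero, div_one] at this
  refine hlim.congr' ?_
  filter_upwards [hT.eventually_gt_atTop 0] with k hk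
  have := (hn k).ne'
  simp only [e, f]
  field_simp
  ring

theorem stmt17_general (j : ℕ → ℕ)
    (h : ℕ → ℕ) (hh : ∀ i, h i ≤ j i)
    (I : Set ℕ) [DecidablePred (· ∈ I)]
    (n : ℕ → ℝ) (hn : ∀ k, 0 < n k)
    (w : ℕ → ℕ → ℕ → ℝ)
    (b : Set (ℕ × ℕ)) (hbfin : b.Finite)
    (p q : ℚ)
    (huniform : ∀ i jj k, jj < j i → (i, jj) ∉ b → w i jj k = n k)
    (hbound : ∀ i jj k, jj < j i → (p : ℝ) * n k ≤ w i jj k ∧ w i jj k ≤ (q : ℝ) * n k)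
    (htot : Tendsto (fun k => ∑ i ∈ Finset.range k, j i) atTop atTop)
    (L : ℝ)
    (hL : Tendsto (fun k =>
        ((∑ i ∈ (Finset.range k).filter (· ∈ I), h i : ℕ) : ℝ) /
          ((∑ i ∈ Finset.range k, j i : ℕ) : ℝ)) atTop (nhds L)) :
    Tendsto (fun k =>
        (∑ i ∈ (Finset.range k).filter (· ∈ I), ∑ jj ∈ Finset.range (h i), w i jj k) /
          (∑ i ∈ Finset.range k, ∑ jj ∈ Finset.range (j i), w i jj k))
      atTop (nhds L) := by
  set C := max |(p : ℝ) - 1| |(q : ℝ) - 1|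
  have hw : ∀ i jj k, jj < j i → |w i jj k - n k| ≤ C * n k := fun i jj k hjj =>
    abs_sub_le_max_mul_of_mul_le_of_le_mul (hn k).le (hbound i jj k hjj).1 (hbound i jj k hjj).2
  have hCn : ∀ k, 0 ≤ C * n k := fun k => mul_nonneg (le_max_of_le_left (abs_nonneg _)) (hn k).le
  refine tendsto_div_of_abs_sub_mul_le (B := #hbfin.toFinset * C) hn
    (tendsto_natCast_atTop_atTop.comp htot) hL (fun k => ?_) (fun k => ?_) <;> rw [mul_assoc]
  · exact abs_sum_sum_range_sub_mul_le _ h (w · · k) _ _ (hCn k)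
      (fun i _ jj hjj hb => huniform i jj k (hjj.trans_le (hh i)) (by simpa using hb))
      fun i _ jj hjj => hw i jj k (hjj.trans_le (hh i))
  · exact abs_sum_sum_range_sub_mul_le _ j (w · · k) _ _ (hCn k)
      (fun i _ jj hjj hb => huniform i jj k hjj (by simpa using hb))
      fun i _ jj hjj => hw i jj k hjj

theorem stmt17 (j : ℕ → ℕ) (hj : ∀ i, 1 ≤ j i)
    (h : ℕ → ℕ) (hh : ∀ i, h i ≤ j i)
    (I : Set ℕ) [DecidablePred (· ∈ I)]
    (n : ℕ → ℝ) (hn : ∀ k, 0 < n k)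
    (w : ℕ → ℕ → ℕ → ℝ)
    (b : Set (ℕ × ℕ)) (hbfin : b.Finite)
    (p q : ℚ) (hp : 0 < p) (hp1 : (p : ℝ) ≤ 1) (hq1 : (1 : ℝ) ≤ (q : ℝ))
    (huniform : ∀ i jj k, jj < j i → (i, jj) ∉ b → w i jj k = n k)
    (hbound : ∀ i jj k, jj < j i → (p : ℝ) * n k ≤ w i jj k ∧ w i jj k ≤ (q : ℝ) * n k)
    (htot : Tendsto (fun k => ∑ i ∈ Finset.range k, j i) atTop atTop)
    (L : ℝ)
    (hL : Tendsto (fun k =>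
        ((∑ i ∈ (Finset.range k).filter (· ∈ I), h i : ℕ) : ℝ) /
          ((∑ i ∈ Finset.range k, j i : ℕ) : ℝ)) atTop (nhds L)) :
    Tendsto (fun k =>
        (∑ i ∈ (Finset.range k).filter (· ∈ I), ∑ jj ∈ Finset.range (h i), w i jj k) /
          (∑ i ∈ Finset.range k, ∑ jj ∈ Finset.range (j i), w i jj k))
      atTop (nhds L) :=
  stmt17_general j h hh I n hn w b hbfin p q huniform hbound htot L hL
end

section
/- For cuts A, B of nonnegative rationals, define A ≈ B iff int(A) ⊆ B ⊆ cl(A), where int(A) = A −̣ (A ÷̣ FN) and cl(A) = A +̣ (A ÷̣ FN). Then ≈ restricted to cuts of the form ⟦α⟧ ± FN with α infinite identifies external and internal perturbations: for every cut α strictly above FN (with α/FN > FN), one has (α −̇ FN) ≈ (α +̇ FN). -/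
variable (K : Type*) [Field K] [LinearOrder K] [IsStrictOrderedRing K]

/-- A cut: a downward-closed subset of the nonnegative elements with no greatest element. -/
def IsCutK (A : Set K) : Prop :=
  A ⊆ {x | 0 ≤ x} ∧ (∀ a b : K, 0 ≤ a → a ≤ b → b ∈ A → a ∈ A) ∧
    ∀ a ∈ A, ∃ b ∈ A, a < b

/-- The cut of finite (standard-bounded) elements. -/
def FNcut : Set K := {x | 0 ≤ x ∧ ∃ n : ℕ, x < (n : K)}

variable {K}

/-- `B' = B ∪ {min of the nonnegative complement of B}`. -/
def plusSetK (B : Set K) : Set K := B ∪ {b | IsLeast ({x | 0 ≤ x} \ B) b}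

/-- Internal sum. -/
def intSumK (A B : Set K) : Set K :=
  {x | 0 ≤ x ∧ ∃ a ∈ A, ∃ b ∈ B, x < a + b}

/-- External sum. -/
def extSumK (A B : Set K) : Set K :=
  {x | 0 ≤ x ∧ ∀ a, 0 ≤ a → a ∉ A → ∀ b, 0 ≤ b → b ∉ B → x < a + b}

/-- Internal difference. -/
def intDiffK (A B : Set K) : Set K :=
  {x | 0 ≤ x ∧ ∀ b ∈ plusSetK B, x + b ∈ A}

/-- External difference. -/
def extDiffK (A B : Set K) : Set K :=
  {x | 0 ≤ x ∧ ∃ b, 0 ≤ b ∧ b ∉ B ∧ x + b ∈ A}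

/-- Internal quotient. -/
def intQuotK (A B : Set K) : Set K :=
  {x | 0 ≤ x ∧ ∀ b ∈ plusSetK B, x * b ∈ A}

/-- External quotient. -/
def extQuotK (A B : Set K) : Set K :=
  {x | 0 ≤ x ∧ ∃ b, 0 ≤ b ∧ b ∉ B ∧ x * b ∈ A}

/-- Interior of a cut: `A −̣ (A ÷̣ FN)`. -/
def interiorCut (A : Set K) : Set K := intDiffK A (intQuotK A (FNcut K))

/-- Closure of a cut: `A +̣ (A ÷̣ FN)`. -/
def closureCut (A : Set K) : Set K := intSumK A (intQuotK A (FNcut K))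

/-- Equivalence of cuts: `A ≈ B` iff `int(A) ⊆ B ⊆ cl(A)`. -/
def cutEquiv (A B : Set K) : Prop := interiorCut A ⊆ B ∧ B ⊆ closureCut A

/-!
Pick an infinite `x` and an infinite `c` with `x * c ∈ α`. For every standard `k` and finite
`b`, `x * c = (k x) b + x (c - k b)` with `x (c - k b)` infinite, so all `k x` lie in
`Q = (α −̇ FN) ÷̣ FN`. Since `0 ∈ Q`, the interior of `α −̇ FN` lies in `α −̇ FN`, which lies below
every element outside `α` and hence in `α +̇ FN`. Conversely, an element `y ≥ 2x` of `α +̇ FN`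
satisfies `y - x ∈ α`, so `y - 2x ∈ α −̇ FN` and `y < (y - 2x) + 3x`; a smaller `y` is below
`0 + 3x`. Both cases put `y` in the closure.
-/

section
variable {K : Type*} [Field K] [LinearOrder K] [IsStrictOrderedRing K]

theorem zero_mem_FNcut : (0 : K) ∈ FNcut K := ⟨le_rfl, 1, by simp⟩

theorem one_mem_FNcut : (1 : K) ∈ FNcut K := ⟨zero_le_one, 2, by norm_num⟩

omit [IsStrictOrderedRing K] in
theorem natCast_le_of_notMem_FNcut {x : K} (hx0 : 0 ≤ x) (hx : x ∉ FNcut K) (n : ℕ) :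
    (n : K) ≤ x :=
  not_lt.mp fun hn => hx ⟨hx0, n, hn⟩

omit [IsStrictOrderedRing K] in
theorem lt_of_mem_FNcut_of_notMem {b c : K} (hb : b ∈ FNcut K) (hc0 : 0 ≤ c)
    (hc : c ∉ FNcut K) : b < c := by
  obtain ⟨-, n, hbn⟩ := hb
  exact hbn.trans_le (natCast_le_of_notMem_FNcut hc0 hc n)

omit [IsStrictOrderedRing K] in
theorem notMem_FNcut_of_le {c d : K} (hc0 : 0 ≤ c) (hc : c ∉ FNcut K) (hcd : c ≤ d) :
    d ∉ FNcut K :=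
  fun ⟨_, n, hdn⟩ => hc ⟨hc0, n, hcd.trans_lt hdn⟩

theorem sub_notMem_FNcut {b c : K} (hb : b ∈ FNcut K) (hc0 : 0 ≤ c) (hc : c ∉ FNcut K) :
    c - b ∉ FNcut K := by
  rintro ⟨-, n, hn⟩
  obtain ⟨-, m, hm⟩ := hb
  have := natCast_le_of_notMem_FNcut hc0 hc (n + m)
  push_cast at this
  linarith

theorem natCast_mul_mem_FNcut (k : ℕ) {b : K} (hb : b ∈ FNcut K) : (k : K) * b ∈ FNcut K := by
  obtain ⟨hb0, n, hbn⟩ := hb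
  refine ⟨by positivity, k * n + 1, ?_⟩
  push_cast
  linarith [mul_le_mul_of_nonneg_left hbn.le (Nat.cast_nonneg (α := K) k)]

/-- `FN` has no least infinite element, since with `b` also `b - 1` is infinite. -/
theorem plusSetK_FNcut : plusSetK (FNcut K) = FNcut K := by
  refine Set.union_eq_left.mpr fun b ⟨⟨hb0, hb⟩, hleast⟩ => ?_
  have h1 : (1 : K) < b := lt_of_mem_FNcut_of_notMem one_mem_FNcut hb0 hb
  have := hleast ⟨show (0 : K) ≤ b - 1 by linarith, sub_notMem_FNcut one_mem_FNcut hb0 hb⟩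
  linarith

omit [IsStrictOrderedRing K] in
theorem intDiffK_subset_of_zero_mem {A B : Set K} (h0 : (0 : K) ∈ B) : intDiffK A B ⊆ A :=
  fun _ ⟨_, hx⟩ => by simpa using hx 0 (Or.inl h0)

theorem extDiffK_subset_extSumK {A B C : Set K}
    (hA : ∀ a b : K, 0 ≤ a → a ≤ b → b ∈ A → a ∈ A) : extDiffK A B ⊆ extSumK A C := by
  rintro x ⟨hx0, d, hd0, -, hxd⟩
  refine ⟨hx0, fun a ha0 ha b hb0 _ => ?_⟩
  have : x + d < a := not_le.mp fun hle => ha (hA a _ ha0 hle hxd)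
  linarith

theorem natCast_mul_mem_intQuotK_extDiffK {α : Set K} {x c : K} (hx : 1 ≤ x) (hc0 : 0 ≤ c)
    (hc : c ∉ FNcut K) (hxc : x * c ∈ α) (k : ℕ) :
    (k : K) * x ∈ intQuotK (extDiffK α (FNcut K)) (FNcut K) := by
  have hx0 : 0 ≤ x := zero_le_one.trans hx
  refine ⟨by positivity, fun b hb => ?_⟩
  rw [plusSetK_FNcut] at hb
  have hkb := natCast_mul_mem_FNcut k hb
  have hrest : 0 ≤ c - k * b := sub_nonneg.mpr (lt_of_mem_FNcut_of_notMem hkb hc0 hc).le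
  refine ⟨mul_nonneg (by positivity) hb.1, x * (c - k * b), mul_nonneg hx0 hrest,
    notMem_FNcut_of_le hrest (sub_notMem_FNcut hkb hc0 hc) (le_mul_of_one_le_left hrest hx), ?_⟩
  convert hxc using 1
  ring

theorem extSumK_subset_intSumK_extDiffK {α B Q : Set K} {x q : K} (hx0 : 0 ≤ x) (hx : x ∉ B)
    (h0 : (0 : K) ∈ extDiffK α B) (hq : q ∈ Q) (hxq : 2 * x < q) :
    extSumK α B ⊆ intSumK (extDiffK α B) Q := by
  rintro y ⟨hy0, hy⟩
  refine ⟨hy0, ?_⟩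
  rcases le_or_gt (2 * x) y with hxy | hyx
  · have hsub : y - x ∈ α := by
      by_contra h
      linarith [hy (y - x) (by linarith) h x hx0 hx]
    refine ⟨y - 2 * x, ⟨by linarith, x, hx0, hx, ?_⟩, q, hq, by linarith⟩
    convert hsub using 1
    ring
  · exact ⟨0, h0, q, hq, by linarith⟩

end

theorem stmt19_general {K : Type*} [Field K] [LinearOrder K] [IsStrictOrderedRing K] (α : Set K)
    (hα : IsCutK K α)
    (hbig : FNcut K ⊂ extQuotK α (FNcut K)) :
    cutEquiv (extDiffK α (FNcut K)) (extSumK α (FNcut K)) := by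
  obtain ⟨x, ⟨hx0, c, hc0, hc, hxc⟩, hx⟩ := Set.exists_of_ssubset hbig
  have hx1 : (1 : K) ≤ x := by exact_mod_cast natCast_le_of_notMem_FNcut hx0 hx 1
  have hQ := natCast_mul_mem_intQuotK_extDiffK hx1 hc0 hc hxc
  have hQ0 : (0 : K) ∈ intQuotK (extDiffK α (FNcut K)) (FNcut K) := by simpa using hQ 0
  have h0 : (0 : K) ∈ extDiffK α (FNcut K) := by simpa using hQ0.2 0 (Or.inl zero_mem_FNcut)
  refine ⟨(intDiffK_subset_of_zero_mem hQ0).trans (extDiffK_subset_extSumK hα.2.1), ?_⟩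
  exact extSumK_subset_intSumK_extDiffK hx0 hx h0 (hQ 3) (by push_cast; linarith)

theorem stmt19 {K : Type*} [Field K] [LinearOrder K] [IsStrictOrderedRing K] (α : Set K)
    (hα : IsCutK K α) (hFNα : FNcut K ⊂ α)
    (hbig : FNcut K ⊂ extQuotK α (FNcut K)) :
    cutEquiv (extDiffK α (FNcut K)) (extSumK α (FNcut K)) :=
  stmt19_general α hα hbig
end
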